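/- arXiv:1510.00238 — 6 statements merged into one kernel-verified Lean document; each statement's English description precedes it below -/
import Mathlib

section
/- Let G be a Roelcke-precompact Polish group, K a compact Hausdorff topological group, and φ : G → K a continuous group homomorphism with dense image. Then φ is surjective. (Equivalently: the canonical morphism from a Roelcke-precompact Polish group to its Bohr compactification is surjective.) -/
/-!
Roelcke precompactness makes `φ` nearly open. Given `V ∋ 1`, take an open `U ∋ 1` with
`U * U⁻¹ * U⁻¹ * U ⊆ V` and a finite `F` with `U * F * U = G`. With `C = closure (φ '' U)`, the
compact sets `C * {φ f} * C`, `f ∈ F`, cover `K` by density. Those containing `1` lie in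
`C * C⁻¹ * C⁻¹ * C ⊆ closure (φ '' V)`, and the remaining ones form a closed set missing `1`.

A continuous nearly open map `f` with dense range from a Polish space has comeagre range.
Off a meagre set of points `k`, whenever `k ∈ closure (f '' U)` for a basic open `U`, also
`k ∈ closure (f '' B)` for arbitrarily small basic `B ⊆ U`; a nested sequence of such `B`
shrinks to a point `x` by completeness, and `f x = k`. Finally, a comeagre subgroup of the
Baire group `K` meets each of its translates, hence is all of `K`.
-/

open Pointwise

/-- A topological group is Roelcke-precompact if every nonempty open set `U`
admits a finite set `F` with `U * F * U = G`. -/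
def RoelckePrecompact (G : Type*) [Group G] [TopologicalSpace G] : Prop :=
  ∀ U : Set G, U.Nonempty → IsOpen U → ∃ F : Set G, F.Finite ∧ U * F * U = Set.univ

open Filter Set Topology TopologicalSpace

theorem closure_mul_closure_subset {M : Type*} [Mul M] [TopologicalSpace M] [ContinuousMul M]
    (s t : Set M) : closure s * closure t ⊆ closure (s * t) := by
  rintro _ ⟨a, ha, b, hb, rfl⟩
  exact map_mem_closure₂ continuous_mul ha hb fun x hx y hy => mul_mem_mul hx hy

def IsNearlyOpenMap {X Y : Type*} [TopologicalSpace X] [TopologicalSpace Y] (f : X → Y) : Prop :=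
  ∀ x, ∀ U ∈ 𝓝 x, closure (f '' U) ∈ 𝓝 (f x)

theorem exists_antitone_seq_of_forall_exists {α : Type*} [Preorder α] {p : α → Prop}
    {q : ℕ → α → Prop} {a : α} (ha : p a) (h : ∀ n b, p b → ∃ c, p c ∧ c ≤ b ∧ q n c) :
    ∃ u : ℕ → α, Antitone u ∧ (∀ n, p (u n)) ∧ ∀ n, q n (u (n + 1)) := by
  choose! next hp hle hq using h
  let u : ℕ → α := fun n => Nat.rec a (fun n b => next n b) n
  have hu : ∀ n, p (u n) := fun n => Nat.rec ha (fun n ih => hp n _ ih) n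
  exact ⟨u, antitone_nat_of_succ_le fun n => hle n _ (hu n), hu, fun n => hq n _ (hu n)⟩

section Metric

variable {X Y : Type*} [PseudoMetricSpace X] [TopologicalSpace Y] {f : X → Y}

theorem TopologicalSpace.IsTopologicalBasis.exists_mem_subset_dist_lt {𝓑 : Set (Set X)}
    (h𝓑 : IsTopologicalBasis 𝓑) {x : X} {O : Set X} (hO : O ∈ 𝓝 x) {ε : ℝ} (hε : 0 < ε) :
    ∃ B ∈ 𝓑, x ∈ B ∧ B ⊆ O ∧ ∀ y ∈ B, ∀ z ∈ B, dist y z < ε := by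
  obtain ⟨B, hB, hxB, hBO⟩ :=
    h𝓑.mem_nhds_iff.1 (inter_mem hO (Metric.ball_mem_nhds x (half_pos hε)))
  refine ⟨B, hB, hxB, fun y hy => (hBO hy).1, fun y hy z hz => ?_⟩
  have hy' : dist y x < ε / 2 := (hBO hy).2
  have hz' : dist z x < ε / 2 := (hBO hz).2
  linarith [dist_triangle_right y z x]

def unrefinablePoints (f : X → Y) (𝓑 : Set (Set X)) (U : Set X) (ε : ℝ) : Set Y :=
  closure (f '' U) \
    ⋃ B ∈ {B ∈ 𝓑 | B ⊆ U ∧ ∀ x ∈ B, ∀ y ∈ B, dist x y < ε}, closure (f '' B)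

theorem IsNearlyOpenMap.isNowhereDense_unrefinablePoints (hf : IsNearlyOpenMap f)
    {𝓑 : Set (Set X)} (h𝓑 : IsTopologicalBasis 𝓑) {U : Set X} (hU : IsOpen U) {ε : ℝ}
    (hε : 0 < ε) : IsNowhereDense (unrefinablePoints f 𝓑 U ε) := by
  rw [IsNowhereDense, ← not_nonempty_iff_eq_empty]
  rintro ⟨k, hk⟩
  have hkU : k ∈ closure (f '' U) :=
    closure_minimal sdiff_subset isClosed_closure (interior_subset hk)
  obtain ⟨_, hxS, x, hxU, rfl⟩ := mem_closure_iff.1 hkU _ isOpen_interior hk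
  obtain ⟨B, hB, hxB, hBU, hBsmall⟩ := h𝓑.exists_mem_subset_dist_lt (hU.mem_nhds hxU) hε
  obtain ⟨y, hyB, hyS⟩ :=
    mem_closure_iff_nhds.1 (interior_subset hxS) _ (hf x B (h𝓑.mem_nhds hB hxB))
  exact hyS.2 (mem_biUnion (show B ∈ {B ∈ 𝓑 | _} from ⟨hB, hBU, hBsmall⟩) hyB)

theorem mem_range_of_antitone_of_mem_closure_image [CompleteSpace X] [T2Space Y]
    (hf : Continuous f) {U : ℕ → Set X} (hU : Antitone U) {k : Y}
    (hk : ∀ n, k ∈ closure (f '' U n))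
    (hsmall : ∀ ε > 0, ∃ n, ∀ x ∈ U n, ∀ y ∈ U n, dist x y < ε) : k ∈ range f := by
  have hbasis := HasAntitoneBasis.iInf_principal hU
  have hne : NeBot (⨅ n, 𝓟 (U n)) := hbasis.1.neBot_iff.2 fun {n} _ =>
    image_nonempty.1 (closure_nonempty_iff.1 ⟨k, hk n⟩)
  obtain ⟨x, hx⟩ := CompleteSpace.complete (Metric.cauchy_iff.2 ⟨hne, fun ε hε =>
    let ⟨n, hn⟩ := hsmall ε hε; ⟨U n, hbasis.mem n, hn⟩⟩)
  have hclus : ClusterPt k (map f (⨅ n, 𝓟 (U n))) :=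
    (hbasis.1.map f).clusterPt_iff_forall_mem_closure.2 fun n _ => hk n
  exact ⟨x, (eq_of_nhds_neBot (hclus.mono ((hf.tendsto x).mono_left hx)).neBot).symm⟩

theorem mem_range_of_forall_notMem_unrefinablePoints [CompleteSpace X] [T2Space Y]
    (hf : Continuous f) {𝓑 : Set (Set X)} {k : Y} (hk : k ∈ closure (range f))
    (hgood : ∀ U ∈ insert univ 𝓑, ∀ n : ℕ, k ∉ unrefinablePoints f 𝓑 U (1 / (n + 1))) :
    k ∈ range f := by
  obtain ⟨U, hU, hUk, hUsmall⟩ := exists_antitone_seq_of_forall_exists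
    (p := fun U => U ∈ insert univ 𝓑 ∧ k ∈ closure (f '' U))
    (q := fun n B => ∀ x ∈ B, ∀ y ∈ B, dist x y < 1 / (n + 1))
    ⟨mem_insert _ _, by rwa [image_univ]⟩ fun n U ⟨hU𝓑, hkU⟩ => by
      obtain ⟨B, ⟨hB, hBU, hBsmall⟩, hkB⟩ :=
        mem_iUnion₂.1 (not_not.1 fun h => hgood U hU𝓑 n ⟨hkU, h⟩)
      exact ⟨B, ⟨mem_insert_of_mem _ hB, hkB⟩, hBU, hBsmall⟩
  refine mem_range_of_antitone_of_mem_closure_image hf hU (fun n => (hUk n).2) fun ε hε => ?_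
  obtain ⟨n, hn⟩ := exists_nat_one_div_lt hε
  exact ⟨n + 1, fun x hx y hy => (hUsmall n x hx y hy).trans hn⟩

end Metric

theorem IsNearlyOpenMap.range_mem_residual {X Y : Type*} [TopologicalSpace X] [PolishSpace X]
    [TopologicalSpace Y] [T2Space Y] {f : X → Y} (hno : IsNearlyOpenMap f) (hf : Continuous f)
    (hd : DenseRange f) : range f ∈ residual Y := by
  let := upgradeIsCompletelyMetrizable X
  have hmeagre : IsMeagre (⋃ U ∈ insert univ (countableBasis X), ⋃ n : ℕ,
      unrefinablePoints f (countableBasis X) U (1 / (n + 1))) := by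
    refine isMeagre_biUnion ((countable_countableBasis X).insert univ) fun U hU =>
      isMeagre_iUnion fun n => IsNowhereDense.isMeagre ?_
    refine hno.isNowhereDense_unrefinablePoints (isBasis_countableBasis X) ?_ (by positivity)
    exact hU.elim (· ▸ isOpen_univ) (isBasis_countableBasis X).isOpen
  refine mem_of_superset hmeagre fun k hk => ?_
  simp only [mem_compl_iff, mem_iUnion, not_exists] at hk
  exact mem_range_of_forall_notMem_unrefinablePoints hf (hd.closure_range ▸ mem_univ k) hk

theorem Subgroup.eq_top_of_mem_residual {K : Type*} [Group K] [TopologicalSpace K]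
    [ContinuousMul K] [BaireSpace K] (H : Subgroup K) (hH : (H : Set K) ∈ residual K) : H = ⊤ := by
  refine (Subgroup.eq_top_iff' H).2 fun k => ?_
  have hkH : (k * ·) ⁻¹' (H : Set K) ∈ residual K := by
    rw [← (Homeomorph.mulLeft k).residual_map_eq] at hH
    exact hH
  obtain ⟨y, hy, hky⟩ := (dense_of_mem_residual (inter_mem hH hkH)).nonempty
  simpa using H.mul_mem hky (H.inv_mem hy)

theorem MonoidHom.isNearlyOpenMap_of_closure_image_mem_nhds_one {G K : Type*} [Group G]
    [TopologicalSpace G] [ContinuousMul G] [Group K] [TopologicalSpace K] [ContinuousMul K]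
    (φ : G →* K) (h : ∀ V ∈ 𝓝 (1 : G), closure (φ '' V) ∈ 𝓝 1) : IsNearlyOpenMap φ := by
  intro x U hU
  have hV : x⁻¹ • U ∈ 𝓝 (1 : G) := by simpa using smul_mem_nhds_smul x⁻¹ hU
  have hU_eq : U = x • x⁻¹ • U := by rw [smul_inv_smul]
  rw [hU_eq, image_smul_distrib, closure_smul]
  simpa using smul_mem_nhds_smul (φ x) (h _ hV)

theorem IsCompact.mul_inv_inv_mul_mem_nhds_one {K : Type*} [Group K] [TopologicalSpace K]
    [ContinuousMul K] [T2Space K] {C P : Set K} (hC : IsCompact C) (hP : P.Finite)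
    (hcover : ⋃ p ∈ P, C * {p} * C = univ) : C * C⁻¹ * C⁻¹ * C ∈ 𝓝 1 := by
  have hthrough_one : ∀ p, (1 : K) ∈ C * {p} * C → C * {p} * C ⊆ C * C⁻¹ * C⁻¹ * C := by
    rintro p ⟨_, ⟨a', ha', _, hp₁, rfl⟩, b', hb', h1⟩ _ ⟨_, ⟨a, ha, _, hp₂, rfl⟩, b, hb, rfl⟩
    rw [mem_singleton_iff.1 hp₁] at h1
    rw [mem_singleton_iff.1 hp₂]
    have hp : p = a'⁻¹ * b'⁻¹ :=
      calc p = a'⁻¹ * (a' * p * b') * b'⁻¹ := by group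
        _ = a'⁻¹ * b'⁻¹ := by rw [show a' * p * b' = 1 from h1, mul_one]
    refine ⟨_, ⟨_, ⟨a, ha, a'⁻¹, inv_mem_inv.2 ha', rfl⟩, b'⁻¹, inv_mem_inv.2 hb', rfl⟩, b, hb, ?_⟩
    show a * a'⁻¹ * b'⁻¹ * b = a * p * b
    rw [hp, mul_assoc a]
  have hfar : IsClosed (⋃ p ∈ {p ∈ P | (1 : K) ∉ C * {p} * C}, C * {p} * C) :=
    (hP.subset (sep_subset _ _)).isClosed_biUnion fun p _ =>
      ((hC.mul isCompact_singleton).mul hC).isClosed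
  refine mem_of_superset (hfar.isOpen_compl.mem_nhds ?_) fun k hk => ?_
  · simp only [mem_compl_iff, mem_iUnion, mem_sep_iff]
    exact fun ⟨p, ⟨_, h1⟩, h1'⟩ => h1 h1'
  · obtain ⟨p, hp, hkp⟩ := mem_iUnion₂.1 (hcover ▸ mem_univ k)
    by_cases h1 : (1 : K) ∈ C * {p} * C
    · exact hthrough_one p h1 hkp
    · exact absurd (mem_iUnion₂.2 ⟨p, ⟨hp, h1⟩, hkp⟩) hk

theorem RoelckePrecompact.closure_image_mem_nhds_one {G K : Type*} [Group G] [TopologicalSpace G]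
    [IsTopologicalGroup G] [Group K] [TopologicalSpace K] [IsTopologicalGroup K] [CompactSpace K]
    [T2Space K] (hRP : RoelckePrecompact G) {φ : G →* K} (hφ : DenseRange φ) {V : Set G}
    (hV : V ∈ 𝓝 1) : closure (φ '' V) ∈ 𝓝 1 := by
  obtain ⟨W, hW, hWV⟩ := exists_nhds_one_split4 hV
  set U := interior (W ∩ W⁻¹)
  have hU1 : (1 : G) ∈ U := mem_interior_iff_mem_nhds.2 (inter_mem hW (inv_mem_nhds_one G hW))
  obtain ⟨F, hF, hUFU⟩ := hRP U ⟨1, hU1⟩ isOpen_interior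
  set C := closure (φ '' U)
  have hC : IsCompact C := isClosed_closure.isCompact
  have hcover : ⋃ p ∈ φ '' F, C * {p} * C = univ := by
    have hclosed : IsClosed (⋃ p ∈ φ '' F, C * {p} * C) :=
      (hF.image φ).isClosed_biUnion fun p _ => ((hC.mul isCompact_singleton).mul hC).isClosed
    have hrange : range φ ⊆ ⋃ p ∈ φ '' F, C * {p} * C := by
      rintro _ ⟨g, rfl⟩
      obtain ⟨_, ⟨a, ha, f, hf, rfl⟩, b, hb, rfl⟩ : g ∈ U * F * U := hUFU ▸ mem_univ g
      rw [map_mul, map_mul]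
      exact mem_biUnion (mem_image_of_mem φ hf) (mul_mem_mul
        (mul_mem_mul (subset_closure (mem_image_of_mem φ ha)) rfl)
        (subset_closure (mem_image_of_mem φ hb)))
    exact univ_subset_iff.1 (hφ.closure_range ▸ closure_minimal hrange hclosed)
  have hUV : U * U⁻¹ * U⁻¹ * U ⊆ V := by
    rintro _ ⟨_, ⟨_, ⟨a, ha, b, hb, rfl⟩, c, hc, rfl⟩, d, hd, rfl⟩
    exact hWV (interior_subset ha).1 (by simpa using (interior_subset hb).2)
      (by simpa using (interior_subset hc).2) (interior_subset hd).1
  refine mem_of_superset (hC.mul_inv_inv_mul_mem_nhds_one (hF.image φ) hcover) ?_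
  calc C * C⁻¹ * C⁻¹ * C
      ⊆ closure (φ '' U * φ '' U⁻¹ * φ '' U⁻¹ * φ '' U) := by
        rw [inv_closure, ← image_inv]
        refine (mul_subset_mul_right ?_).trans (closure_mul_closure_subset _ _)
        refine (mul_subset_mul_right ?_).trans (closure_mul_closure_subset _ _)
        exact closure_mul_closure_subset _ _
    _ ⊆ closure (φ '' V) := by
        rw [← image_mul, ← image_mul, ← image_mul]
        exact closure_mono (image_mono hUV)

/-- Any continuous homomorphism with dense image from a Roelcke-precompact Polish group
to a compact Hausdorff group is surjective; in particular the morphism to the Bohr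
compactification is surjective. -/
theorem stmt_3 (G K : Type*) [Group G] [TopologicalSpace G] [IsTopologicalGroup G]
    [PolishSpace G] (hRP : RoelckePrecompact G)
    [Group K] [TopologicalSpace K] [IsTopologicalGroup K] [CompactSpace K] [T2Space K]
    (φ : G →* K) (hφ : Continuous φ) (hdense : DenseRange φ) :
    Function.Surjective φ := by
  have hno : IsNearlyOpenMap φ :=
    φ.isNearlyOpenMap_of_closure_image_mem_nhds_one fun _ => hRP.closure_image_mem_nhds_one hdense
  have hrange : φ.range = ⊤ :=
    φ.range.eq_top_of_mem_residual (by simpa using hno.range_mem_residual hφ hdense)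
  exact MonoidHom.range_eq_top.1 hrange
end

section
/- Let G be a Polish group and H ≤ G a closed subgroup, and let G/H be the space of left cosets with the quotient topology, on which G acts by left translation. Then the following are equivalent: (1) there exists a metric on G/H inducing the quotient topology which is invariant under the G-action (d(g·x, g·y) = d(x,y) for all g ∈ G, x, y ∈ G/H); (2) for every open neighborhood U of the identity in G there exists an open neighborhood V of the identity such that V·H ⊆ H·U. -/
/-!
For a sequence of symmetric identity neighbourhoods `Uₙ` of `G` with
`Uₙ₊₁ H Uₙ₊₁ H Uₙ₊₁ ⊆ Uₙ H`, the relations "`xH` and `yH` have representatives with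
`x⁻¹ y ∈ Uₙ`" are invariant under left translation and compose like the entourages of a
metrizable uniformity, so the usual metrization (`d = 2⁻ⁿ` for the first `n` separating the
points, then the largest pseudometric below `d`) yields a `G`-invariant metric. The condition
`V H ⊆ H U` is exactly what makes such a sequence exist and makes the relations a neighbourhood
basis in `G ⧸ H`; conversely the balls around `H` of an invariant metric are `H`-invariant, which
gives `V H ⊆ H U`. Closedness of `H` makes the pseudometric a metric.
-/

open Pointwise

open Set Filter Topology NNReal

section SepDist

open Classical

variable {X : Type*}

noncomputable def sepDist (R : ℕ → X → X → Prop) (a b : X) : ℝ≥0 :=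
  if h : ∃ n, ¬ R n a b then (1 / 2) ^ Nat.find h else 0

variable {R : ℕ → X → X → Prop}

theorem sepDist_congr {a b a' b' : X} (h : ∀ n, R n a b ↔ R n a' b') :
    sepDist R a b = sepDist R a' b' := by
  change sepDist (fun n _ _ => R n a b) a b = sepDist (fun n _ _ => R n a' b') a b
  congr 1
  exact funext fun n => funext₂ fun _ _ => propext (h n)

theorem sepDist_self (hrefl : ∀ n a, R n a a) (a : X) : sepDist R a a = 0 := by
  simp [sepDist, hrefl]

theorem sepDist_comm (hsymm : ∀ n a b, R n a b → R n b a) (a b : X) :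
    sepDist R a b = sepDist R b a :=
  sepDist_congr fun n => ⟨hsymm n a b, hsymm n b a⟩

theorem pow_le_sepDist_iff (hanti : Antitone R) {a b : X} {n : ℕ} :
    (1 / 2 : ℝ≥0) ^ n ≤ sepDist R a b ↔ ¬ R n a b := by
  have hr : (1 / 2 : ℝ≥0) < 1 := NNReal.half_lt_self one_ne_zero
  unfold sepDist
  split_ifs with h
  · rw [(pow_right_strictAnti₀ (by positivity) hr).le_iff_ge, Nat.find_le_iff]
    exact ⟨fun ⟨m, hmn, hm⟩ hn => hm (hanti hmn a b hn), fun h' => ⟨n, le_rfl, h'⟩⟩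
  · push Not at h
    simp [h n]

theorem sepDist_le_two_mul_max (hanti : Antitone R)
    (htrans : ∀ n a b c e, R (n + 1) a b → R (n + 1) b c → R (n + 1) c e → R n a e)
    (a b c e : X) :
    sepDist R a e ≤ 2 * max (sepDist R a b) (max (sepDist R b c) (sepDist R c e)) := by
  by_cases h : ∃ n, ¬ R n a e
  · rw [show sepDist R a e = (1 / 2) ^ Nat.find h from dif_pos h, ← div_le_iff₀' zero_lt_two,
      ← mul_one_div (_ ^ _), ← pow_succ]
    simp only [le_max_iff, pow_le_sepDist_iff hanti, ← not_and_or]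
    rintro ⟨hab, hbc, hce⟩
    exact Nat.find_spec h (htrans _ _ _ _ _ hab hbc hce)
  · rw [show sepDist R a e = 0 from dif_neg h]
    exact zero_le

end SepDist

theorem PseudoMetricSpace.dist_ofPreNNDist_map {X : Type*} (d : X → X → ℝ≥0)
    (dist_self : ∀ x, d x x = 0) (dist_comm : ∀ x y, d x y = d y x) {f : X → X}
    (hf : Function.Surjective f) (hd : ∀ x y, d (f x) (f y) = d x y) (x y : X) :
    letI := PseudoMetricSpace.ofPreNNDist d dist_self dist_comm
    dist (f x) (f y) = dist x y := by
  simp only [PseudoMetricSpace.dist_ofPreNNDist]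
  congr 1
  refine ((hf.list_map).iInf_congr _ fun l => ?_).symm
  rw [← List.map_cons, show l.map f ++ [f y] = (l ++ [y]).map f by simp, List.zipWith_map]
  simp only [hd]

section RelMetric

variable {X : Type*} {R : ℕ → X → X → Prop}

theorem antitone_of_refl_of_trans (hrefl : ∀ n a, R n a a)
    (htrans : ∀ n a b c e, R (n + 1) a b → R (n + 1) b c → R (n + 1) c e → R n a e) :
    Antitone R :=
  antitone_nat_of_succ_le fun n a b hab => htrans n a b b b hab (hrefl _ b) (hrefl _ b)

theorem exists_pseudometric_of_rel (hrefl : ∀ n a, R n a a)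
    (hsymm : ∀ n a b, R n a b → R n b a)
    (htrans : ∀ n a b c e, R (n + 1) a b → R (n + 1) b c → R (n + 1) c e → R n a e) :
    ∃ D : X → X → ℝ, (∀ a, D a a = 0) ∧ (∀ a b, D a b = D b a) ∧
      (∀ a b c, D a c ≤ D a b + D b c) ∧ (∀ n a b, R n a b → D a b < (1 / 2) ^ n) ∧
      (∀ n a b, D a b < (1 / 2) ^ (n + 1) → R n a b) ∧
      ∀ f : X → X, Function.Surjective f → (∀ n a b, R n (f a) (f b) ↔ R n a b) →
        ∀ a b, D (f a) (f b) = D a b := by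
  have hanti := antitone_of_refl_of_trans hrefl htrans
  let _ := PseudoMetricSpace.ofPreNNDist (sepDist R) (sepDist_self hrefl) (sepDist_comm hsymm)
  have hdist_le (a b : X) : dist a b ≤ sepDist R a b :=
    PseudoMetricSpace.dist_ofPreNNDist_le _ _ _ a b
  have hle_dist (a b : X) : (sepDist R a b : ℝ) ≤ 2 * dist a b :=
    PseudoMetricSpace.le_two_mul_dist_ofPreNNDist _ _ _
      (sepDist_le_two_mul_max hanti htrans) a b
  refine ⟨dist, dist_self, dist_comm, dist_triangle, fun n a b hab => ?_, fun n a b hab => ?_,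
    fun f hf hfR a b => PseudoMetricSpace.dist_ofPreNNDist_map _ _ _ hf
      (fun a b => sepDist_congr (hfR · a b)) a b⟩
  · refine (hdist_le a b).trans_lt ?_
    exact_mod_cast not_le.1 (mt (pow_le_sepDist_iff hanti).1 (not_not.2 hab))
  · by_contra h
    have h2 : ((1 / 2 : ℝ≥0) : ℝ) ^ n ≤ sepDist R a b :=
      mod_cast (pow_le_sepDist_iff hanti).2 h
    have := hle_dist a b
    rw [pow_succ] at hab
    push_cast at h2
    linarith

variable [TopologicalSpace X]

theorem isOpen_iff_of_hasBasis_rel {D : X → X → ℝ}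
    (hbasis : ∀ a, (𝓝 a).HasBasis (fun _ => True) fun n => {b | R n a b})
    (hlt : ∀ n a b, R n a b → D a b < (1 / 2) ^ n)
    (hR : ∀ n a b, D a b < (1 / 2) ^ (n + 1) → R n a b) (s : Set X) :
    IsOpen s ↔ ∀ a ∈ s, ∃ ε > 0, ∀ b, D a b < ε → b ∈ s := by
  rw [isOpen_iff_mem_nhds]
  refine forall₂_congr fun a _ => (hbasis a).mem_iff.trans ⟨?_, ?_⟩
  · rintro ⟨n, -, hn⟩
    exact ⟨(1 / 2) ^ (n + 1), by positivity, fun b hb => hn (hR n a b hb)⟩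
  · rintro ⟨ε, hε, hs⟩
    obtain ⟨n, hn⟩ := exists_pow_lt_of_lt_one hε (by norm_num : (1 / 2 : ℝ) < 1)
    exact ⟨n, trivial, fun b hb => hs b ((hlt n a b hb).trans hn)⟩

theorem eq_of_forall_rel [T1Space X]
    (hbasis : ∀ a, (𝓝 a).HasBasis (fun _ => True) fun n => {b | R n a b}) {a b : X}
    (h : ∀ n, R n a b) : a = b := by
  by_contra hab
  obtain ⟨n, -, hn⟩ := (hbasis a).mem_iff.1 (compl_singleton_mem_nhds hab)
  exact hn (h n) rfl

end RelMetric

section CosetRel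

variable {G : Type*} [Group G] (H : Subgroup G)

def cosetRel (S : Set G) (a b : G ⧸ H) : Prop :=
  ∃ x y : G, (x : G ⧸ H) = a ∧ (y : G ⧸ H) = b ∧ x⁻¹ * y ∈ S

variable {H} {S T : Set G}

theorem cosetRel_refl (hS : (1 : G) ∈ S) (a : G ⧸ H) : cosetRel H S a a := by
  obtain ⟨x, rfl⟩ := QuotientGroup.mk_surjective a
  exact ⟨x, x, rfl, rfl, by simpa using hS⟩

theorem cosetRel.symm (hS : S⁻¹ = S) {a b : G ⧸ H} (h : cosetRel H S a b) :
    cosetRel H S b a := by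
  obtain ⟨x, y, hx, hy, hxy⟩ := h
  refine ⟨y, x, hy, hx, ?_⟩
  rw [← hS, Set.mem_inv, mul_inv_rev, inv_inv]
  exact hxy

theorem cosetRel.smul {a b : G ⧸ H} (h : cosetRel H S a b) (g : G) :
    cosetRel H S (g • a) (g • b) := by
  obtain ⟨x, y, rfl, rfl, hxy⟩ := h
  exact ⟨g * x, g * y, rfl, rfl, by simpa [mul_assoc] using hxy⟩

theorem cosetRel_smul_iff (g : G) {a b : G ⧸ H} :
    cosetRel H S (g • a) (g • b) ↔ cosetRel H S a b :=
  ⟨fun h => by simpa using h.smul g⁻¹, fun h => h.smul g⟩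

theorem cosetRel.trans₃ (hST : S * H * S * H * S ⊆ T * H) {a b c e : G ⧸ H}
    (hab : cosetRel H S a b) (hbc : cosetRel H S b c) (hce : cosetRel H S c e) :
    cosetRel H T a e := by
  obtain ⟨x, y, rfl, rfl, hxy⟩ := hab
  obtain ⟨y', z, hy, rfl, hyz⟩ := hbc
  obtain ⟨z', w, hz, rfl, hzw⟩ := hce
  have hmem : x⁻¹ * w ∈ S * H * S * H * S := by
    have hprod : x⁻¹ * w = x⁻¹ * y * (y⁻¹ * y') * (y'⁻¹ * z) * (z⁻¹ * z') * (z'⁻¹ * w) := by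
      group
    rw [hprod]
    exact Set.mul_mem_mul (Set.mul_mem_mul (Set.mul_mem_mul (Set.mul_mem_mul hxy
      (QuotientGroup.eq.1 hy.symm)) hyz) (QuotientGroup.eq.1 hz.symm)) hzw
  obtain ⟨t, ht, k, hk, htk⟩ := hST hmem
  refine ⟨x, w * k⁻¹, rfl, QuotientGroup.eq.2 (by simpa using hk), ?_⟩
  rwa [← mul_assoc, ← htk, mul_inv_cancel_right]

variable [TopologicalSpace G] [IsTopologicalGroup G]

theorem setOf_cosetRel_mem_nhds (hS : S ∈ 𝓝 (1 : G)) (a : G ⧸ H) :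
    {b | cosetRel H S a b} ∈ 𝓝 a := by
  obtain ⟨g, rfl⟩ := QuotientGroup.mk_surjective a
  have hopen : IsOpenMap fun s : G => ((g * s : G) : G ⧸ H) :=
    QuotientGroup.isOpenMap_coe.comp (isOpenMap_mul_left g)
  refine Filter.mem_of_superset (by simpa using hopen.image_mem_nhds hS) ?_
  rintro _ ⟨s, hs, rfl⟩
  exact ⟨g, g * s, rfl, rfl, by simpa using hs⟩

theorem nhds_hasBasis_cosetRel {U : ℕ → Set G} (hU : ∀ n, U n ∈ 𝓝 (1 : G))
    (hUH : ∀ N ∈ 𝓝 (1 : G), ∃ n, (H : Set G) * U n ⊆ N * H) (a : G ⧸ H) :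
    (𝓝 a).HasBasis (fun _ => True) fun n => {b | cosetRel H (U n) a b} := by
  refine ⟨fun O => ⟨fun hO => ?_, fun ⟨n, _, hn⟩ => Filter.mem_of_superset
    (setOf_cosetRel_mem_nhds (hU n) a) hn⟩⟩
  obtain ⟨g, rfl⟩ := QuotientGroup.mk_surjective a
  have hN : (fun u : G => ((g * u : G) : G ⧸ H)) ⁻¹' O ∈ 𝓝 (1 : G) :=
    (QuotientGroup.continuous_mk.comp (continuous_const_mul g)).tendsto' 1 _ (by simp) hO
  obtain ⟨n, hn⟩ := hUH _ hN
  refine ⟨n, trivial, ?_⟩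
  rintro _ ⟨x, y, hx, rfl, hxy⟩
  obtain ⟨u, hu, k, hk, huk : u * k = _⟩ :=
    hn (Set.mul_mem_mul (QuotientGroup.eq.1 hx.symm) hxy)
  have hy : y = g * u * k := by
    rw [mul_assoc, huk]
    group
  rw [hy, QuotientGroup.mk_mul_of_mem _ hk]
  exact hu

end CosetRel

section NhdsCondition

variable {G : Type*} [Group G] [TopologicalSpace G] [IsTopologicalGroup G] {H : Subgroup G}

theorem forall_isOpen_exists_mul_subset_iff :
    (∀ U : Set G, IsOpen U → (1 : G) ∈ U →
        ∃ V : Set G, IsOpen V ∧ (1 : G) ∈ V ∧ V * (H : Set G) ⊆ (H : Set G) * U) ↔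
      ∀ U ∈ 𝓝 (1 : G), ∃ V ∈ 𝓝 (1 : G), (H : Set G) * V ⊆ U * H := by
  have hinv (U V : Set G) : V * (H : Set G) ⊆ H * U ↔ H * V⁻¹ ⊆ U⁻¹ * H := by
    rw [← Set.inv_subset_inv, mul_inv_rev, mul_inv_rev, inv_coe_set]
  constructor
  · intro h U hU
    obtain ⟨U', hU'U, hU'o, hU'1⟩ := mem_nhds_iff.1 hU
    obtain ⟨V, hVo, hV1, hVH⟩ := h U'⁻¹ hU'o.inv (by simpa using hU'1)
    refine ⟨V⁻¹, hVo.inv.mem_nhds (by simpa using hV1), ?_⟩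
    rw [hinv, inv_inv] at hVH
    exact hVH.trans (Set.mul_subset_mul_right hU'U)
  · intro h U hU hU1
    obtain ⟨V, hV, hVH⟩ := h U⁻¹ (hU.inv.mem_nhds (by simpa using hU1))
    obtain ⟨V', hV'V, hV'o, hV'1⟩ := mem_nhds_iff.1 hV
    refine ⟨V'⁻¹, hV'o.inv, by simpa using hV'1, ?_⟩
    rw [hinv, inv_inv]
    exact (Set.mul_subset_mul_left hV'V).trans hVH

variable (hC : ∀ U ∈ 𝓝 (1 : G), ∃ V ∈ 𝓝 (1 : G), (H : Set G) * V ⊆ U * H)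
include hC

theorem exists_symm_nhds_mul_mul_subset {S : Set G} (hS : S ∈ 𝓝 (1 : G)) :
    ∃ V ∈ 𝓝 (1 : G), V⁻¹ = V ∧ V ⊆ S ∧ V * H * V * H * V ⊆ S * H := by
  obtain ⟨W, hW, hWS⟩ := exists_nhds_one_split4 hS
  obtain ⟨V, hV, hVH⟩ := hC W hW
  have hW1 := mem_of_mem_nhds hW
  have hVW := inter_mem hV hW
  refine ⟨(V ∩ W) ∩ (V ∩ W)⁻¹, inter_mem hVW (inv_mem_nhds_one G hVW),
    by rw [Set.inter_inv, inv_inv, Set.inter_comm], fun v hv => ?_, ?_⟩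
  · simpa using hWS hv.1.2 hW1 hW1 hW1
  rintro _ ⟨_, ⟨_, ⟨_, ⟨v₁, hv₁, k₁, hk₁, rfl⟩, v₂, hv₂, rfl⟩, k₂, hk₂, rfl⟩, v₃, hv₃, rfl⟩
  obtain ⟨w₂, hw₂, l₂, hl₂, h₂ : w₂ * l₂ = k₁ * v₂⟩ := hVH (Set.mul_mem_mul hk₁ hv₂.1.1)
  obtain ⟨w₃, hw₃, l₃, hl₃, h₃ : w₃ * l₃ = l₂ * k₂ * v₃⟩ :=
    hVH (Set.mul_mem_mul (H.mul_mem hl₂ hk₂) hv₃.1.1)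
  refine ⟨v₁ * w₂ * w₃ * 1, hWS hv₁.1.2 hw₂ hw₃ hW1, l₃, hl₃, ?_⟩
  calc v₁ * w₂ * w₃ * 1 * l₃ = v₁ * w₂ * (w₃ * l₃) := by group
    _ = v₁ * (w₂ * l₂) * k₂ * v₃ := by rw [h₃]; group
    _ = v₁ * k₁ * v₂ * k₂ * v₃ := by rw [h₂]; group

theorem exists_seq_nhds_one_mul_mul_subset [(𝓝 (1 : G)).IsCountablyGenerated] :
    ∃ U : ℕ → Set G, (∀ n, U n ∈ 𝓝 (1 : G)) ∧ (∀ n, (U n)⁻¹ = U n) ∧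
      (∀ n, U (n + 1) * H * U (n + 1) * H * U (n + 1) ⊆ U n * H) ∧
      ∀ N ∈ 𝓝 (1 : G), ∃ n, (H : Set G) * U n ⊆ N * H := by
  obtain ⟨B, hB⟩ := (𝓝 (1 : G)).exists_antitone_basis
  choose! F hF using fun S (hS : S ∈ 𝓝 (1 : G)) => exists_symm_nhds_mul_mul_subset hC hS
  let U : ℕ → Set G := fun n => Nat.rec univ (fun n Un => F (Un ∩ B n)) n
  have hU (n : ℕ) : U n ∈ 𝓝 (1 : G) := by
    induction n with
    | zero => exact univ_mem
    | succ n ih => exact (hF _ (inter_mem ih (hB.mem n))).1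
  have hFU (n : ℕ) := hF _ (inter_mem (hU n) (hB.mem n))
  refine ⟨U, hU, fun n => ?_, fun n => ?_, fun N hN => ?_⟩
  · cases n with
    | zero => exact Set.inv_univ
    | succ n => exact (hFU n).2.1
  · exact (hFU n).2.2.2.trans (Set.mul_subset_mul_right inter_subset_left)
  · obtain ⟨V, hV, hVH⟩ := hC N hN
    obtain ⟨n, -, hn⟩ := hB.toHasBasis.mem_iff.1 hV
    exact ⟨n + 1, (Set.mul_subset_mul_left
      ((hFU n).2.2.1.trans (inter_subset_right.trans hn))).trans hVH⟩

end NhdsCondition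

theorem exists_nhds_mul_subset_of_invariant_dist {G : Type*} [Group G] [TopologicalSpace G]
    [IsTopologicalGroup G] {H : Subgroup G} {d : G ⧸ H → G ⧸ H → ℝ} (hself : ∀ x, d x x = 0)
    (htri : ∀ x y z, d x z ≤ d x y + d y z)
    (hopen : ∀ s : Set (G ⧸ H), IsOpen s ↔ ∀ x ∈ s, ∃ ε > 0, ∀ y, d x y < ε → y ∈ s)
    (hinv : ∀ (g : G) (x y : G ⧸ H), d (g • x) (g • y) = d x y) :
    ∀ U ∈ 𝓝 (1 : G), ∃ V ∈ 𝓝 (1 : G), (H : Set G) * V ⊆ U * H := by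
  intro U hU
  set x₀ : G ⧸ H := ((1 : G) : G ⧸ H)
  obtain ⟨O, hOU, hOo, hO1⟩ := mem_nhds_iff.1 (QuotientGroup.isOpenMap_coe.image_mem_nhds hU)
  obtain ⟨ε, hε, hball⟩ := (hopen O).1 hOo x₀ hO1
  have hball_open : IsOpen {y | d x₀ y < ε} := (hopen _).2 fun x (hx : d x₀ x < ε) =>
    ⟨ε - d x₀ x, sub_pos.2 hx, fun y hy => show d x₀ y < ε by linarith [htri x₀ x y]⟩
  have hx₀ : d x₀ x₀ < ε := by rwa [hself]
  refine ⟨QuotientGroup.mk ⁻¹' {y | d x₀ y < ε},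
    (hball_open.preimage QuotientGroup.continuous_mk).mem_nhds hx₀, ?_⟩
  rintro _ ⟨k, hk, v, hv, rfl⟩
  have hkx₀ : k • x₀ = x₀ := by
    show ((k * 1 : G) : G ⧸ H) = _
    simpa using QuotientGroup.mk_mul_of_mem (1 : G) hk
  have hkv : d x₀ ((k * v : G) : G ⧸ H) < ε := by
    calc d x₀ ((k * v : G) : G ⧸ H) = d (k • x₀) (k • (v : G ⧸ H)) := by rw [hkx₀]; rfl
      _ = d x₀ v := hinv k _ _
      _ < ε := hv
  rw [← QuotientGroup.preimage_image_mk_eq_mul]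
  exact hOU (hball _ hkv)

/-- For a Polish group `G` and a closed subgroup `H`, the quotient `G ⧸ H` (with the
quotient topology and the left translation action) admits a compatible `G`-invariant
metric if and only if for every neighbourhood `U` of the identity there is a
neighbourhood `V` of the identity with `V·H ⊆ H·U`. -/
theorem stmt_4 (G : Type*) [Group G] [TopologicalSpace G] [IsTopologicalGroup G]
    [PolishSpace G] (H : Subgroup G) (hH : IsClosed (H : Set G)) :
    (∃ d : (G ⧸ H) → (G ⧸ H) → ℝ,
        (∀ x y, d x y = 0 ↔ x = y) ∧
        (∀ x y, d x y = d y x) ∧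
        (∀ x y z, d x z ≤ d x y + d y z) ∧
        (∀ s : Set (G ⧸ H), IsOpen s ↔ ∀ x ∈ s, ∃ ε > 0, ∀ y, d x y < ε → y ∈ s) ∧
        (∀ (g : G) (x y : G ⧸ H), d (g • x) (g • y) = d x y)) ↔
      (∀ U : Set G, IsOpen U → (1 : G) ∈ U →
        ∃ V : Set G, IsOpen V ∧ (1 : G) ∈ V ∧ V * (H : Set G) ⊆ (H : Set G) * U) := by
  rw [forall_isOpen_exists_mul_subset_iff]
  constructor
  · rintro ⟨d, hd, -, htri, hopen, hinv⟩
    exact exists_nhds_mul_subset_of_invariant_dist (fun x => (hd x x).2 rfl) htri hopen hinv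
  · intro hC
    obtain ⟨U, hU, hUsymm, hUtrans, hUH⟩ := exists_seq_nhds_one_mul_mul_subset hC
    obtain ⟨D, hself, hcomm, htri, hlt, hR, hmap⟩ :=
      exists_pseudometric_of_rel (R := fun n => cosetRel H (U n))
        (fun n => cosetRel_refl (mem_of_mem_nhds (hU n))) (fun n _ _ h => h.symm (hUsymm n))
        (fun n _ _ _ _ => cosetRel.trans₃ (hUtrans n))
    have hbasis := nhds_hasBasis_cosetRel hU hUH
    have : T1Space (G ⧸ H) := QuotientGroup.t1Space_iff.2 hH
    refine ⟨D, fun a b => ⟨fun h => eq_of_forall_rel hbasis fun n => hR n a b ?_,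
      fun h => h ▸ hself a⟩, hcomm, htri, isOpen_iff_of_hasBasis_rel hbasis hlt hR,
      fun g => hmap _ (MulAction.surjective g) fun n a b => cosetRel_smul_iff g⟩
    rw [h]
    positivity
end

section
/- Let G be a Roelcke-precompact Polish group, let X and Y be nonempty complete metric spaces equipped with jointly continuous isometric G-actions in which every orbit is dense (minimal complete G-spaces), and let π : Y → X be continuous and G-equivariant. Then π is uniformly continuous. -/
open Pointwise

/-!
Continuity at a single point `y₀` propagates along the orbit of `y₀`: since `G` acts by isometries
and `π` is equivariant, the same `δ` witnesses continuity at every `g • y₀`. As that orbit is dense,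
any two `δ/2`-close points lie within `δ` of a common orbit point, so the same `δ` works uniformly.
-/

section

variable {G X Y : Type*} [Group G] [PseudoMetricSpace X] [PseudoMetricSpace Y]
  [MulAction G X] [MulAction G Y] [IsIsometricSMul G X] [IsIsometricSMul G Y] {π : Y → X}

theorem dist_apply_smul_lt_of_forall_dist_lt (hequiv : ∀ (g : G) (y : Y), π (g • y) = g • π y)
    {y₀ : Y} {δ ε : ℝ} (hπ : ∀ w, dist w y₀ < δ → dist (π w) (π y₀) < ε) (g : G) {w : Y}
    (hw : dist w (g • y₀) < δ) : dist (π w) (g • π y₀) < ε := by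
  have hw' : dist (g⁻¹ • w) y₀ < δ := by rwa [← dist_smul g, smul_inv_smul]
  rw [← dist_smul g⁻¹, inv_smul_smul, ← hequiv]
  exact hπ _ hw'

theorem uniformContinuous_of_continuousAt_of_dense_orbit
    (hequiv : ∀ (g : G) (y : Y), π (g • y) = g • π y) {y₀ : Y}
    (hdense : Dense (MulAction.orbit G y₀)) (hπ : ContinuousAt π y₀) : UniformContinuous π := by
  rw [Metric.uniformContinuous_iff]
  intro ε hε
  obtain ⟨δ, hδ, hπδ⟩ := Metric.continuousAt_iff.mp hπ (ε / 2) (half_pos hε)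
  have hπδ' := dist_apply_smul_lt_of_forall_dist_lt hequiv (fun _ h => hπδ h)
  refine ⟨δ / 2, half_pos hδ, fun {y y'} hyy' => ?_⟩
  obtain ⟨_, hz, g, rfl⟩ := Metric.dense_iff.mp hdense y' (δ / 2) (half_pos hδ)
  have hy' : dist y' (g • y₀) < δ / 2 := by rwa [dist_comm]
  have hy : dist y (g • y₀) < δ :=
    calc dist y (g • y₀) ≤ dist y y' + dist y' (g • y₀) := dist_triangle _ _ _
      _ < δ / 2 + δ / 2 := add_lt_add hyy' hy'
      _ = δ := add_halves δ
  calc dist (π y) (π y') ≤ dist (π y) (g • π y₀) + dist (π y') (g • π y₀) :=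
        dist_triangle_right _ _ _
    _ < ε / 2 + ε / 2 :=
        add_lt_add (hπδ' g hy) (hπδ' g (hy'.trans (half_lt_self hδ)))
    _ = ε := add_halves ε

end

theorem stmt_5_general (G : Type*) [Group G]
    (X Y : Type*) [MetricSpace X]
    [MetricSpace Y] [Nonempty Y]
    [MulAction G X] [MulAction G Y]
    (hisoX : ∀ g : G, Isometry fun x : X => g • x)
    (hisoY : ∀ g : G, Isometry fun y : Y => g • y)
    (hminY : ∀ y : Y, Dense (MulAction.orbit G y))
    (π : Y → X) (hπ : Continuous π)
    (hequiv : ∀ (g : G) (y : Y), π (g • y) = g • π y) :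
    UniformContinuous π := by
  have : IsIsometricSMul G X := ⟨hisoX⟩
  have : IsIsometricSMul G Y := ⟨hisoY⟩
  obtain ⟨y₀⟩ := ‹Nonempty Y›
  exact uniformContinuous_of_continuousAt_of_dense_orbit hequiv (hminY y₀) hπ.continuousAt

/-- A morphism between minimal complete `G`-spaces, for `G` Roelcke-precompact Polish,
is uniformly continuous. -/
theorem stmt_5 (G : Type*) [Group G] [TopologicalSpace G] [IsTopologicalGroup G]
    [PolishSpace G] (hRP : RoelckePrecompact G)
    (X Y : Type*) [MetricSpace X] [CompleteSpace X] [Nonempty X]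
    [MetricSpace Y] [CompleteSpace Y] [Nonempty Y]
    [MulAction G X] [MulAction G Y]
    (hcX : Continuous fun p : G × X => p.1 • p.2)
    (hisoX : ∀ g : G, Isometry fun x : X => g • x)
    (hminX : ∀ x : X, Dense (MulAction.orbit G x))
    (hcY : Continuous fun p : G × Y => p.1 • p.2)
    (hisoY : ∀ g : G, Isometry fun y : Y => g • y)
    (hminY : ∀ y : Y, Dense (MulAction.orbit G y))
    (π : Y → X) (hπ : Continuous π)
    (hequiv : ∀ (g : G) (y : Y), π (g • y) = g • π y) :
    UniformContinuous π :=
  stmt_5_general G X Y hisoX hisoY hminY π hπ hequiv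
end

section
/- Let G be a Roelcke-precompact Polish group and let d_L be a compatible left-invariant metric on G (d_L(hg, hg') = d_L(g, g') for all g, g', h). Let X be a nonempty complete metric space with a jointly continuous isometric G-action in which every orbit is dense, and let (x_i)_{i ∈ ℕ} be a sequence in X. Then there exist a point z ∈ X and, for each i ∈ ℕ, a sequence (g_{i,n})_{n ∈ ℕ} in G which is Cauchy with respect to d_L and satisfies g_{i,n}·x_i → z as n → ∞. -/
open Pointwise Filter

/-!
Write `x ⇝ y` if `g n • x → y` for some sequence `g` that is Cauchy for the left-invariant metric.
By Roelcke precompactness any sequence `a k` in `G` has a subsequence with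
`a (φ (j + 1)) = u j * a (φ j) * v j`, where `u j` and `v j` are summably close to `1`.
If `a k • x → y`, the partial products `C` of the `v j` (started at `a (φ 0)`) and `D` of the
`u j⁻¹` are Cauchy and satisfy `C j = D j * a (φ j)`, so they carry `x` and `y` to a common point
while `D` stays near `1`. Right multiplication by the tail of a Cauchy sequence is equicontinuous
at `1`, hence a witness of `x ⇝ y` can be composed with any sufficiently small Cauchy step out
of `y`. Adding the points `x i` one at a time with steps of size `2⁻ⁿ` yields a Cauchy sequence
of common points, and its limit is reached from each `x i` by a diagonal sequence.
-/

open Topology Metric MulAction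

theorem exists_seq_of_forall_exists_succ {α : Type*} {P : ℕ → α → Prop}
    {R : ℕ → α → α → Prop} {a : α} (h₀ : P 0 a) (h : ∀ n a, P n a → ∃ b, P (n + 1) b ∧ R n a b) :
    ∃ f : ℕ → α, ∀ n, P n (f n) ∧ R n (f n) (f (n + 1)) := by
  have : Nonempty α := ⟨a⟩
  choose! g hgP hgR using h
  let f : ℕ → α := fun n => Nat.rec a (fun n b => g n b) n
  have hf : ∀ n, P n (f n) := fun n => by
    induction n with
    | zero => exact h₀
    | succ n ih => exact hgP n _ ih
  exact ⟨f, fun n => ⟨hf n, hgR n _ (hf n)⟩⟩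

theorem exists_cauchySeq_tendsto_smul_of_le_geometric {G X : Type*} [PseudoMetricSpace G]
    [PseudoMetricSpace X] [SMul G X] {W : ℕ → ℕ → G} {x : X} {y : ℕ → X} {z : X}
    (hW : ∀ t, Tendsto (W t · • x) atTop (𝓝 (y t))) (hy : Tendsto y atTop (𝓝 z))
    (hlink : ∀ t, ∃ N, ∀ k l, N ≤ l → dist (W (t + 1) k) (W t l) ≤ (1 / 2) ^ t) :
    ∃ g : ℕ → G, CauchySeq g ∧ Tendsto (g · • x) atTop (𝓝 z) := by
  choose N hN using hlink
  have hk : ∀ t, ∃ k, N t ≤ k ∧ dist (W t k • x) (y t) < (1 / 2) ^ t := fun t =>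
    ((eventually_ge_atTop (N t)).and ((hW t).eventually (ball_mem_nhds _ (by positivity)))).exists
  choose k hkN hkdist using hk
  refine ⟨fun t => W t (k t), cauchySeq_of_le_geometric (1 / 2) 1 (by norm_num) fun t => ?_,
    hy.congr_dist ?_⟩
  · rw [dist_comm, one_mul]
    exact hN t _ _ (hkN t)
  · refine squeeze_zero (fun _ => dist_nonneg) (fun t => ?_)
      (tendsto_pow_atTop_nhds_zero_of_lt_one (by norm_num) (by norm_num : (1 / 2 : ℝ) < 1))
    rw [dist_comm]
    exact (hkdist t).le

theorem dist_smul_eq_dist_inv_mul_smul {G X : Type*} [Group G] [PseudoMetricSpace X] [MulAction G X]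
    [IsIsometricSMul G X] (g h : G) (x : X) :
    dist (g • x) (h • x) = dist ((h⁻¹ * g) • x) x := by
  rw [← dist_smul h⁻¹, smul_smul, smul_smul, inv_mul_cancel, one_smul]

section LeftInvariant

variable {G : Type*} [Group G] [PseudoMetricSpace G] [IsIsometricSMul G G]

theorem dist_eq_dist_inv_mul_one (a b : G) : dist a b = dist (b⁻¹ * a) 1 := by
  rw [← dist_mul_left b⁻¹, inv_mul_cancel]

theorem dist_self_mul_eq (a b : G) : dist a (a * b) = dist b 1 := by
  rw [← dist_mul_left a b 1, mul_one, dist_comm]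

theorem dist_inv_one (a : G) : dist a⁻¹ 1 = dist a 1 := by
  rw [← dist_mul_left a, mul_inv_cancel, mul_one, dist_comm]

theorem dist_mul_one_le (a b : G) : dist (a * b) 1 ≤ dist a 1 + dist b 1 := by
  calc dist (a * b) 1 ≤ dist (a * b) a + dist a 1 := dist_triangle _ _ _
    _ = dist a 1 + dist b 1 := by rw [dist_comm, dist_self_mul_eq, add_comm]

theorem CauchySeq.exists_forall_dist_mul_lt [ContinuousMul G] {W : ℕ → G} (hW : CauchySeq W)
    {γ : ℝ} (hγ : 0 < γ) :
    ∃ ε > 0, ∃ N, ∀ m ≥ N, ∀ c : G, dist c 1 < ε → dist (c * W m) (W m) < γ := by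
  obtain ⟨N, hN⟩ := Metric.cauchySeq_iff'.1 hW (γ / 3) (by positivity)
  obtain ⟨ε, hε, hcont⟩ := Metric.continuousAt_iff.1
    ((continuous_mul_const (W N)).continuousAt (x := 1)) (γ / 3) (by positivity)
  refine ⟨ε, hε, N, fun m hm c hc => ?_⟩
  have hc' : dist (c * W N) (W N) < γ / 3 := by simpa using hcont hc
  calc dist (c * W m) (W m)
      ≤ dist (c * W m) (c * W N) + dist (c * W N) (W N) + dist (W N) (W m) := dist_triangle4 _ _ _ _
    _ < γ / 3 + γ / 3 + γ / 3 := by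
        rw [dist_mul_left, dist_comm (W N)]
        gcongr
        all_goals exact hN m hm
    _ = γ := by ring

theorem CauchySeq.mul_of_leftInvariant [ContinuousMul G] {C W : ℕ → G} (hC : CauchySeq C)
    (hW : CauchySeq W) : CauchySeq fun k => C k * W k := by
  refine Metric.cauchySeq_iff.2 fun γ hγ => ?_
  obtain ⟨ε, hε, N₁, hconj⟩ := hW.exists_forall_dist_mul_lt (half_pos hγ)
  obtain ⟨N₂, hN₂⟩ := Metric.cauchySeq_iff.1 hW (γ / 2) (half_pos hγ)
  obtain ⟨N₃, hN₃⟩ := Metric.cauchySeq_iff.1 hC ε hε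
  refine ⟨max N₁ (max N₂ N₃), fun k hk l hl => ?_⟩
  have hCkl : dist ((C l)⁻¹ * C k) 1 < ε := by
    rw [← dist_eq_dist_inv_mul_one]
    exact hN₃ k (by omega) l (by omega)
  calc dist (C k * W k) (C l * W l)
      ≤ dist (C k * W k) (C k * W l) + dist (C k * W l) (C l * W l) := dist_triangle _ _ _
    _ = dist (W k) (W l) + dist ((C l)⁻¹ * C k * W l) (W l) := by
        rw [dist_mul_left, ← dist_mul_left (C l)⁻¹ (C k * W l), inv_mul_cancel_left, mul_assoc]
    _ < γ / 2 + γ / 2 := add_lt_add (hN₂ k (by omega) l (by omega)) (hconj l (by omega) _ hCkl)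
    _ = γ := add_halves γ

variable {X : Type*} [PseudoMetricSpace X] [MulAction G X] [IsIsometricSMul G X]

theorem uniformContinuous_smul_const [ContinuousSMul G X] (x : X) :
    UniformContinuous fun g : G => g • x := by
  refine Metric.uniformContinuous_iff.2 fun ε hε => ?_
  obtain ⟨δ, hδ, hcont⟩ := Metric.continuousAt_iff.1
    ((continuous_id.smul continuous_const : Continuous fun g : G => g • x).continuousAt
      (x := 1)) ε hε
  refine ⟨δ, hδ, fun {g h} hgh => ?_⟩
  rw [dist_eq_dist_inv_mul_one] at hgh
  rw [dist_smul_eq_dist_inv_mul_smul]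
  simpa using hcont hgh

theorem CauchySeq.smul_const [ContinuousSMul G X] {g : ℕ → G} (hg : CauchySeq g) (x : X) :
    CauchySeq fun n => g n • x :=
  (uniformContinuous_smul_const x).comp_cauchySeq hg

theorem CauchySeq.eventually_smallSets_compose [ContinuousMul G] {W : ℕ → G} (hW : CauchySeq W)
    {x y : X} (hWx : Tendsto (W · • x) atTop (𝓝 y)) {κ : ℝ} (hκ : 0 < κ) :
    ∀ᶠ U in (𝓝 (1 : G)).smallSets, ∀ C : ℕ → G, CauchySeq C → (∀ k, C k ∈ U) →
      ∀ z, Tendsto (C · • y) atTop (𝓝 z) → ∃ W' : ℕ → G, CauchySeq W' ∧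
        Tendsto (W' · • x) atTop (𝓝 z) ∧ ∃ N, ∀ k l, N ≤ l → dist (W' k) (W l) < κ := by
  obtain ⟨ε, hε, N₁, hconj⟩ := hW.exists_forall_dist_mul_lt (half_pos hκ)
  obtain ⟨N₂, hN₂⟩ := Metric.cauchySeq_iff.1 hW (κ / 2) (half_pos hκ)
  refine eventually_smallSets.2 ⟨ball 1 ε, ball_mem_nhds 1 hε, fun U hU C hC hCU z hCz => ?_⟩
  set N := max N₁ N₂
  have hshift : Tendsto (· + N) atTop atTop := tendsto_add_atTop_nat N
  refine ⟨fun k => C k * W (k + N), hC.mul_of_leftInvariant (hW.comp_tendsto hshift),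
    hCz.congr_dist ?_, N, fun k l hl => ?_⟩
  · simpa [mul_smul, dist_comm y] using tendsto_iff_dist_tendsto_zero.1 (hWx.comp hshift)
  · calc dist (C k * W (k + N)) (W l)
        ≤ dist (C k * W (k + N)) (W (k + N)) + dist (W (k + N)) (W l) := dist_triangle _ _ _
      _ < κ / 2 + κ / 2 :=
          add_lt_add (hconj _ (by omega) _ (mem_ball.1 (hU (hCU k))))
            (hN₂ _ (by omega) _ (by omega))
      _ = κ := add_halves κ

theorem RoelckePrecompact.exists_infinite_subset (hRP : RoelckePrecompact G) (a : ℕ → G)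
    {ε : ℝ} (hε : 0 < ε) {S : Set ℕ} (hS : S.Infinite) :
    ∃ S' ⊆ S, S'.Infinite ∧ ∀ k ∈ S', ∀ l ∈ S', ∃ u v : G,
      dist u 1 < ε ∧ dist v 1 < ε ∧ a l = u * a k * v := by
  obtain ⟨F, hF, hcover⟩ := hRP (ball 1 (ε / 2)) ⟨1, mem_ball_self (half_pos hε)⟩ isOpen_ball
  have hmem : ∀ k, ∃ f ∈ F, ∃ p q : G, dist p 1 < ε / 2 ∧ dist q 1 < ε / 2 ∧ a k = p * f * q := by
    intro k
    obtain ⟨_, ⟨p, hp, f, hf, rfl⟩, q, hq, hpfq⟩ : a k ∈ ball 1 (ε / 2) * F * ball 1 (ε / 2) :=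
      hcover ▸ Set.mem_univ _
    exact ⟨f, hf, p, q, hp, hq, hpfq.symm⟩
  choose f hfF p q hp hq hpfq using hmem
  obtain ⟨f₀, -, hinf⟩ : ∃ f₀ ∈ F, (S ∩ f ⁻¹' {f₀}).Infinite := by
    by_contra! hfin
    exact hS ((hF.biUnion hfin).subset fun k hk => Set.mem_iUnion₂.2 ⟨f k, hfF k, hk, rfl⟩)
  refine ⟨S ∩ f ⁻¹' {f₀}, Set.inter_subset_left, hinf, ?_⟩
  rintro k ⟨-, hk⟩ l ⟨-, hl⟩
  refine ⟨p l * (p k)⁻¹, (q k)⁻¹ * q l, ?_, ?_, ?_⟩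
  · linarith [dist_mul_one_le (p l) (p k)⁻¹, dist_inv_one (p k), hp k, hp l]
  · linarith [dist_mul_one_le (q k)⁻¹ (q l), dist_inv_one (q k), hq k, hq l]
  · rw [hpfq l, hpfq k, show f l = f k from hl.trans hk.symm]
    group

theorem RoelckePrecompact.exists_strictMono_eq_mul_mul (hRP : RoelckePrecompact G) (a : ℕ → G)
    {δ : ℕ → ℝ} (hδ : ∀ j, 0 < δ j) :
    ∃ φ : ℕ → ℕ, StrictMono φ ∧ ∃ u v : ℕ → G, ∀ j,
      dist (u j) 1 < δ j ∧ dist (v j) 1 < δ j ∧ a (φ (j + 1)) = u j * a (φ j) * v j := by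
  obtain ⟨S, hS⟩ := exists_seq_of_forall_exists_succ (P := fun _ (s : Set ℕ) => s.Infinite)
    (R := fun j (s s' : Set ℕ) => s' ⊆ s ∧ ∀ k ∈ s', ∀ l ∈ s', ∃ u v : G,
      dist u 1 < δ j ∧ dist v 1 < δ j ∧ a l = u * a k * v) Set.infinite_univ
    fun j s hs => by
      obtain ⟨s', hs's, hs', hpair⟩ := hRP.exists_infinite_subset a (hδ j) hs
      exact ⟨s', hs', hs's, hpair⟩
  obtain ⟨φ, hφ, hφS⟩ := extraction_forall_of_frequently fun j =>
    Nat.frequently_atTop_iff_infinite.2 (hS (j + 1)).1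
  choose u v huv using fun j =>
    (hS j).2.2 (φ j) (hφS j) (φ (j + 1)) ((hS (j + 1)).2.1 (hφS (j + 1)))
  exact ⟨φ, hφ, u, v, huv⟩

theorem RoelckePrecompact.exists_amalgam [CompleteSpace X] [ContinuousSMul G X]
    (hRP : RoelckePrecompact G) {x y : X} (hy : y ∈ closure (orbit G x)) {U : Set G}
    (hU : U ∈ 𝓝 1) :
    ∃ z, ∃ C D : ℕ → G, CauchySeq C ∧ CauchySeq D ∧ (∀ k, D k ∈ U) ∧
      Tendsto (C · • x) atTop (𝓝 z) ∧ Tendsto (D · • y) atTop (𝓝 z) := by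
  obtain ⟨ε, hε, hεU⟩ := Metric.mem_nhds_iff.1 hU
  obtain ⟨b, hb, hby⟩ := mem_closure_iff_seq_limit.1 hy
  choose a ha using hb
  obtain ⟨φ, hφ, u, v, huv⟩ :=
    hRP.exists_strictMono_eq_mul_mul a (δ := fun j => ε / 4 * (1 / 2) ^ j) fun j => by positivity
  set D : ℕ → G := fun j => ((List.range j).map fun i => (u i)⁻¹).prod
  set C : ℕ → G := fun j => a (φ 0) * ((List.range j).map v).prod
  have hCD : ∀ j, C j = D j * a (φ j) := by
    intro j
    induction j with
    | zero => simp [C, D]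
    | succ j ih =>
      simp only [C, D, List.prod_range_succ] at ih ⊢
      rw [(huv j).2.2, ← mul_assoc, ih]
      group
  have hDstep : ∀ j, dist (D j) (D (j + 1)) ≤ ε / 4 * (1 / 2) ^ j := fun j => by
    simpa [D, List.prod_range_succ, dist_self_mul_eq, dist_inv_one] using (huv j).1.le
  have hCstep : ∀ j, dist (C j) (C (j + 1)) ≤ ε / 4 * (1 / 2) ^ j := fun j => by
    simpa [C, List.prod_range_succ, ← mul_assoc, dist_self_mul_eq] using (huv j).2.1.le
  have hCc : CauchySeq C := cauchySeq_of_le_geometric _ _ (by norm_num) hCstep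
  have hDU : ∀ j, D j ∈ U := fun j => hεU <| by
    calc dist (D j) 1 = dist (D 0) (D j) := by simp [D, dist_comm]
      _ ≤ ∑ i ∈ Finset.range j, ε / 4 * (1 / 2) ^ i :=
          dist_le_range_sum_of_dist_le j fun _ => hDstep _
      _ ≤ ε / 4 * 2 := by rw [← Finset.mul_sum]; gcongr; exact sum_geometric_two_le j
      _ < ε := by linarith
  obtain ⟨z, hz⟩ := cauchySeq_tendsto_of_complete (hCc.smul_const x)
  refine ⟨z, C, D, hCc, cauchySeq_of_le_geometric _ _ (by norm_num) hDstep, hDU, hz,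
    hz.congr_dist ?_⟩
  have hax : Tendsto (fun j => a (φ j) • x) atTop (𝓝 y) := by
    simpa only [Function.comp_def, ha] using hby.comp hφ.tendsto_atTop
  simpa [hCD, mul_smul] using tendsto_iff_dist_tendsto_zero.1 hax

theorem RoelckePrecompact.exists_amalgam_finset [ContinuousMul G] [CompleteSpace X]
    [ContinuousSMul G X] (hRP : RoelckePrecompact G) {ι : Type*} (s : Finset ι) {x : ι → X}
    {W : ι → ℕ → G} {z x' : X} (hz : z ∈ closure (orbit G x'))
    (hW : ∀ i ∈ s, CauchySeq (W i) ∧ Tendsto (W i · • x i) atTop (𝓝 z)) {κ : ℝ} (hκ : 0 < κ) :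
    ∃ z', dist z' z ≤ κ ∧ (∃ C : ℕ → G, CauchySeq C ∧ Tendsto (C · • x') atTop (𝓝 z')) ∧
      ∃ W' : ι → ℕ → G, ∀ i ∈ s, CauchySeq (W' i) ∧ Tendsto (W' i · • x i) atTop (𝓝 z') ∧
        ∃ N, ∀ k l, N ≤ l → dist (W' i k) (W i l) < κ := by
  have hact : ∀ᶠ c in 𝓝 (1 : G), dist (c • z) z < κ :=
    ((continuous_id.smul continuous_const).tendsto' 1 z (one_smul G z)).eventually
      (ball_mem_nhds z hκ)
  obtain ⟨U, hU, hUsmall⟩ := eventually_smallSets.1 <|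
    (eventually_smallSets_forall.2 hact).and <| (eventually_all_finset s).2 fun i hi =>
      (hW i hi).1.eventually_smallSets_compose (hW i hi).2 hκ
  obtain ⟨hUz, hUW⟩ := hUsmall U subset_rfl
  obtain ⟨z', C, D, hC, hD, hDU, hCx, hDz⟩ := hRP.exists_amalgam hz hU
  choose! W' hW' using fun i hi => hUW i hi D hD hDU z' hDz
  exact ⟨z', le_of_tendsto (hDz.dist tendsto_const_nhds) (.of_forall fun k => (hUz _ (hDU k)).le),
    ⟨C, hC, hCx⟩, W', hW'⟩

theorem RoelckePrecompact.exists_seq_amalgam [ContinuousMul G] [CompleteSpace X]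
    [ContinuousSMul G X] (hRP : RoelckePrecompact G) (hmin : ∀ x : X, Dense (orbit G x))
    (x : ℕ → X) :
    ∃ (z : ℕ → X) (W : ℕ → ℕ → ℕ → G), ∀ n,
      (∀ i ≤ n, CauchySeq (W n i) ∧ Tendsto (W n i · • x i) atTop (𝓝 (z n))) ∧
      dist (z (n + 1)) (z n) ≤ (1 / 2) ^ n ∧
      ∀ i ≤ n, ∃ N, ∀ k l, N ≤ l → dist (W (n + 1) i k) (W n i l) ≤ (1 / 2) ^ n := by
  refine (exists_seq_of_forall_exists_succ (a := (x 0, fun _ _ => (1 : G)))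
    (P := fun n (r : X × (ℕ → ℕ → G)) =>
      ∀ i ≤ n, CauchySeq (r.2 i) ∧ Tendsto (r.2 i · • x i) atTop (𝓝 r.1))
    (R := fun n (r r' : X × (ℕ → ℕ → G)) => dist r'.1 r.1 ≤ (1 / 2) ^ n ∧
      ∀ i ≤ n, ∃ N, ∀ k l, N ≤ l → dist (r'.2 i k) (r.2 i l) ≤ (1 / 2) ^ n) ?_ ?_).elim
    fun f hf => ⟨fun n => (f n).1, fun n => (f n).2, hf⟩
  · intro i hi
    obtain rfl : i = 0 := by omega
    exact ⟨cauchySeq_const 1, by simpa using tendsto_const_nhds⟩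
  · rintro n ⟨z, W⟩ hW
    obtain ⟨z', hz', ⟨C, hC, hCx⟩, W', hW'⟩ := hRP.exists_amalgam_finset (Finset.Iic n)
      (hmin (x (n + 1)) z) (fun i hi => hW i (Finset.mem_Iic.1 hi))
      (by positivity : (0 : ℝ) < (1 / 2) ^ n)
    refine ⟨(z', Function.update W' (n + 1) C), fun i hi => ?_, hz', fun i hi => ?_⟩
    · rcases (show i = n + 1 ∨ i ≤ n by omega) with rfl | hi
      · simpa using And.intro hC hCx
      · simpa [Function.update_of_ne (show i ≠ n + 1 by omega)] using
          (hW' i (Finset.mem_Iic.2 hi)).imp_right And.left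
    · obtain ⟨-, -, N, hN⟩ := hW' i (Finset.mem_Iic.2 hi)
      exact ⟨N, fun k l hl => by
        simpa [Function.update_of_ne (show i ≠ n + 1 by omega)] using (hN k l hl).le⟩

theorem RoelckePrecompact.exists_forall_cauchySeq_tendsto_smul [ContinuousMul G] [CompleteSpace X]
    [ContinuousSMul G X] (hRP : RoelckePrecompact G) (hmin : ∀ x : X, Dense (orbit G x))
    (x : ℕ → X) : ∃ z, ∀ i, ∃ g : ℕ → G, CauchySeq g ∧ Tendsto (g · • x i) atTop (𝓝 z) := by
  obtain ⟨z, W, hW⟩ := hRP.exists_seq_amalgam hmin x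
  obtain ⟨zlim, hz⟩ := cauchySeq_tendsto_of_complete <|
    cauchySeq_of_le_geometric (f := z) (1 / 2) 1 (by norm_num) fun n => by
      rw [dist_comm, one_mul]
      exact (hW n).2.1
  refine ⟨zlim, fun i => exists_cauchySeq_tendsto_smul_of_le_geometric
    (W := fun t => W (i + t) i) (y := fun t => z (i + t))
    (fun t => ((hW (i + t)).1 i (by omega)).2)
    ((tendsto_add_atTop_iff_nat i).2 hz |>.congr fun t => by rw [add_comm])
    fun t => ?_⟩
  obtain ⟨N, hN⟩ := (hW (i + t)).2.2 i (by omega)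
  exact ⟨N, fun k l hl =>
    (hN k l hl).trans (pow_le_pow_of_le_one (by norm_num) (by norm_num) (by omega))⟩

end LeftInvariant

theorem stmt_8_general (G : Type*) [Group G] [TopologicalSpace G] [IsTopologicalGroup G]
    (hRP : RoelckePrecompact G)
    (dL : G → G → ℝ)
    (hd0 : ∀ g h : G, dL g h = 0 ↔ g = h)
    (hdsymm : ∀ g h : G, dL g h = dL h g)
    (hdtri : ∀ g h k : G, dL g k ≤ dL g h + dL h k)
    (hdinv : ∀ g g' h : G, dL (h * g) (h * g') = dL g g')
    (hdtop : ∀ (g : G) (s : Set G), s ∈ nhds g ↔ ∃ ε > (0 : ℝ), {h | dL g h < ε} ⊆ s)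
    (X : Type*) [MetricSpace X] [CompleteSpace X] [MulAction G X]
    (hcX : Continuous fun p : G × X => p.1 • p.2)
    (hisoX : ∀ g : G, Isometry fun x : X => g • x)
    (hminX : ∀ x : X, Dense (MulAction.orbit G x))
    (x : ℕ → X) :
    ∃ z : X, ∀ i : ℕ, ∃ g : ℕ → G,
      (∀ ε > (0 : ℝ), ∃ N : ℕ, ∀ m n : ℕ, N ≤ m → N ≤ n → dL (g m) (g n) < ε) ∧
      Tendsto (fun n => g n • x i) atTop (nhds z) := by
  -- `ofDistTopology` keeps the given topology, so `hRP` and `IsTopologicalGroup G` still apply.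
  let : PseudoMetricSpace G := .ofDistTopology dL (fun g => (hd0 g g).2 rfl) hdsymm hdtri
    fun s => isOpen_iff_mem_nhds.trans (forall₂_congr fun g _ => hdtop g s)
  have : IsIsometricSMul G G := ⟨fun h => Isometry.of_dist_eq fun g g' => hdinv g g' h⟩
  have : ContinuousSMul G X := ⟨hcX⟩
  have : IsIsometricSMul G X := ⟨hisoX⟩
  obtain ⟨z, hz⟩ := hRP.exists_forall_cauchySeq_tendsto_smul hminX x
  refine ⟨z, fun i => ?_⟩
  obtain ⟨g, hg, hgx⟩ := hz i
  exact ⟨g, fun ε hε => (Metric.cauchySeq_iff.1 hg ε hε).imp fun N hN m n hm hn => hN m hm n hn,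
    hgx⟩

/-- Amalgamation over the left completion: given a Roelcke-precompact Polish group `G`
with a compatible left-invariant metric `dL`, a minimal complete `G`-space `X` and points
`x i`, there are a point `z` and `dL`-Cauchy sequences `g i n` in `G` with
`g i n • x i → z`. -/
theorem stmt_8 (G : Type*) [Group G] [TopologicalSpace G] [IsTopologicalGroup G]
    [PolishSpace G] (hRP : RoelckePrecompact G)
    (dL : G → G → ℝ)
    (hd0 : ∀ g h : G, dL g h = 0 ↔ g = h)
    (hdsymm : ∀ g h : G, dL g h = dL h g)
    (hdtri : ∀ g h k : G, dL g k ≤ dL g h + dL h k)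
    (hdinv : ∀ g g' h : G, dL (h * g) (h * g') = dL g g')
    (hdtop : ∀ (g : G) (s : Set G), s ∈ nhds g ↔ ∃ ε > (0 : ℝ), {h | dL g h < ε} ⊆ s)
    (X : Type*) [MetricSpace X] [CompleteSpace X] [Nonempty X] [MulAction G X]
    (hcX : Continuous fun p : G × X => p.1 • p.2)
    (hisoX : ∀ g : G, Isometry fun x : X => g • x)
    (hminX : ∀ x : X, Dense (MulAction.orbit G x))
    (x : ℕ → X) :
    ∃ z : X, ∀ i : ℕ, ∃ g : ℕ → G,
      (∀ ε > (0 : ℝ), ∃ N : ℕ, ∀ m n : ℕ, N ≤ m → N ≤ n → dL (g m) (g n) < ε) ∧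
      Tendsto (fun n => g n • x i) atTop (nhds z) :=
  stmt_8_general G hRP dL hd0 hdsymm hdtri hdinv hdtop X hcX hisoX hminX x
end

section
/- The group Homeo⁺[0,1] of homeomorphisms of [0,1] fixing the endpoints, with the topology of uniform convergence, is Roelcke-precompact: for every nonempty open set U ⊆ Homeo⁺[0,1] there exists a finite set F ⊆ Homeo⁺[0,1] such that U·F·U = Homeo⁺[0,1]. -/
/-- The group `Homeo⁺[0,1]` of homeomorphisms of `[0,1]` fixing the endpoints. -/
def HomeoPlus : Type :=
  {g : unitInterval ≃ₜ unitInterval // g 0 = 0 ∧ g 1 = 1}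

instance : Group HomeoPlus where
  mul f g := ⟨g.1.trans f.1, by
    constructor
    · show f.1 (g.1 0) = 0
      rw [g.2.1, f.2.1]
    · show f.1 (g.1 1) = 1
      rw [g.2.2, f.2.2]⟩
  one := ⟨Homeomorph.refl _, rfl, rfl⟩
  inv f := ⟨f.1.symm,
    f.1.toEquiv.symm_apply_eq.mpr f.2.1.symm,
    f.1.toEquiv.symm_apply_eq.mpr f.2.2.symm⟩
  mul_assoc a b c := Subtype.ext (Homeomorph.ext fun _ => rfl)
  one_mul a := Subtype.ext (Homeomorph.ext fun _ => rfl)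
  mul_one a := Subtype.ext (Homeomorph.ext fun _ => rfl)
  inv_mul_cancel a := Subtype.ext (Homeomorph.ext fun x => a.1.symm_apply_apply x)

/-- The topology of uniform convergence on `Homeo⁺[0,1]`, induced from the
sup metric on `C([0,1], [0,1])`. -/
instance : TopologicalSpace HomeoPlus :=
  TopologicalSpace.induced
    (fun g : HomeoPlus => (⟨⇑g.1, g.1.continuous⟩ : C(unitInterval, unitInterval)))
    inferInstance

/-!
Parametrize the graph of `g` by the level `s` of `(x + g x) / 2`: with `meanId g = (id + g) / 2`,
the graph is `s ↦ (x, g x)` for `x = (meanId g)⁻¹ s`, and `(meanId g)⁻¹` is `2`-Lipschitz.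
If `(meanId g)⁻¹` and `(meanId h)⁻¹` are `δ`-close, then `b = (meanId h)⁻¹ * meanId g` moves
points by at most `δ`, and since `x + g x = b x + h (b x)`, so does `a = g * b⁻¹ * h⁻¹`; thus
`g = a * h * b` with `a, b` uniformly `δ`-close to the identity. By Arzelà–Ascoli the `2`-Lipschitz
self-maps of `[0,1]` form a compact, hence totally bounded, set, so finitely many `h` serve all `g`.
-/

open Set Metric Topology Pointwise unitInterval

theorem ContinuousMap.isCompact_setOf_lipschitzWith {X α : Type*} [PseudoEMetricSpace X]
    [PseudoEMetricSpace α] [CompactSpace α] (K : NNReal) :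
    IsCompact {f : C(X, α) | LipschitzWith K f} := by
  refine ArzelaAscoli.isCompact_of_equicontinuous _ ?_
    (LipschitzWith.uniformEquicontinuous _ K fun f => f.2).equicontinuous
  have : ContinuousMap.toFun '' {f : C(X, α) | LipschitzWith K f} =
      {f : X → α | LipschitzWith K f} :=
    Subset.antisymm (by rintro _ ⟨f, hf, rfl⟩; exact hf) fun f hf => ⟨⟨f, hf.continuous⟩, hf, rfl⟩
  rw [this]
  exact (isClosed_setOfPred_lipschitzWith K).isCompact

theorem exists_finite_mul_mul_eq_univ_of_isOpen {G : Type*} [Group G] [TopologicalSpace G]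
    [ContinuousMul G] (h : ∀ V ∈ 𝓝 (1 : G), ∃ F : Set G, F.Finite ∧ V * F * V = univ)
    {U : Set G} (hU : IsOpen U) (hne : U.Nonempty) :
    ∃ F : Set G, F.Finite ∧ U * F * U = univ := by
  obtain ⟨u, hu⟩ := hne
  have hV : (u * ·) ⁻¹' U ∩ (· * u) ⁻¹' U ∈ 𝓝 (1 : G) :=
    Filter.inter_mem ((hU.preimage (continuous_const_mul u)).mem_nhds (by simpa using hu))
      ((hU.preimage (continuous_mul_const u)).mem_nhds (by simpa using hu))
  obtain ⟨F, hF, hVFV⟩ := h _ hV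
  refine ⟨(fun f => u⁻¹ * f * u⁻¹) '' F, hF.image _, eq_univ_of_forall fun g => ?_⟩
  obtain ⟨_, ⟨a, ha, f, hf, rfl⟩, b, hb, rfl⟩ : g ∈ _ * F * _ := hVFV ▸ mem_univ g
  change a * f * b ∈ _
  rw [show a * f * b = a * u * (u⁻¹ * f * u⁻¹) * (u * b) by group]
  exact mul_mem_mul (mul_mem_mul ha.2 (mem_image_of_mem _ hf)) hb.1

namespace HomeoPlus

instance : CoeFun HomeoPlus fun _ => I → I := ⟨fun g => g.1⟩

@[simp] theorem mul_apply (g h : HomeoPlus) (x : I) : (g * h) x = g (h x) := rfl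

@[simp] theorem apply_inv_apply (g : HomeoPlus) (x : I) : g (g⁻¹ x) = x := g.1.apply_symm_apply x

@[simp] theorem inv_apply_apply (g : HomeoPlus) (x : I) : g⁻¹ (g x) = x := g.1.symm_apply_apply x

def toContinuousMap (g : HomeoPlus) : C(I, I) := ⟨g, g.1.continuous⟩

@[simp] theorem toContinuousMap_apply (g : HomeoPlus) (x : I) : g.toContinuousMap x = g x := rfl

theorem isInducing_toContinuousMap : IsInducing toContinuousMap := ⟨rfl⟩

instance : ContinuousMul HomeoPlus :=
  ⟨isInducing_toContinuousMap.continuous_iff.2 <|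
    (isInducing_toContinuousMap.continuous.comp continuous_fst).compCM
      (isInducing_toContinuousMap.continuous.comp continuous_snd)⟩

theorem strictMono (g : HomeoPlus) : StrictMono g :=
  g.1.continuous.strictMono_of_inj_boundedOrder (by change g.1 0 ≤ g.1 1; rw [g.2.1]; exact bot_le)
    g.1.injective

noncomputable def ofInjective (f : I → I) (hc : Continuous f) (hf : Function.Injective f)
    (h0 : f 0 = 0) (h1 : f 1 = 1) : HomeoPlus :=
  ⟨hc.homeoOfEquivCompactToT2 (f := Equiv.ofBijective f ⟨hf, fun y =>
      intermediate_value_univ 0 1 hc (by rw [h0, h1]; exact ⟨y.2.1, y.2.2⟩)⟩), h0, h1⟩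

noncomputable def meanId (g : HomeoPlus) : HomeoPlus :=
  ofInjective (fun x => ⟨((x : ℝ) + g x) / 2, by
      constructor <;> linarith [nonneg x, le_one x, nonneg (g x), le_one (g x)]⟩)
    (by fun_prop)
    (StrictMono.injective fun x y hxy => Subtype.coe_lt_coe.1 <| by
      linarith [Subtype.coe_lt_coe.2 hxy, Subtype.coe_lt_coe.2 (g.strictMono hxy)])
    (by ext; simp [g.2.1]) (by ext; simp [g.2.2])

theorem coe_meanId_apply (g : HomeoPlus) (x : I) : (meanId g x : ℝ) = (x + g x) / 2 := rfl

theorem dist_le_two_mul_dist_meanId (g : HomeoPlus) (x y : I) :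
    dist x y ≤ 2 * dist (meanId g x) (meanId g y) := by
  simp only [Subtype.dist_eq, Real.dist_eq, coe_meanId_apply]
  rcases le_total x y with hxy | hxy
  · have hg : (g x : ℝ) ≤ g y := g.strictMono.monotone hxy
    rw [abs_of_nonpos (sub_nonpos.2 (Subtype.coe_le_coe.2 hxy))]
    linarith [neg_le_abs (((x : ℝ) + g x) / 2 - (y + g y) / 2)]
  · have hg : (g y : ℝ) ≤ g x := g.strictMono.monotone hxy
    rw [abs_of_nonneg (sub_nonneg.2 (Subtype.coe_le_coe.2 hxy))]
    linarith [le_abs_self (((x : ℝ) + g x) / 2 - (y + g y) / 2)]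

theorem lipschitzWith_inv_meanId (g : HomeoPlus) :
    LipschitzWith 2 (meanId g)⁻¹.toContinuousMap :=
  LipschitzWith.of_dist_le_mul fun s t => by
    simpa using dist_le_two_mul_dist_meanId g ((meanId g)⁻¹ s) ((meanId g)⁻¹ t)

theorem exists_eq_mul_mul_of_dist_inv_meanId_le {g h : HomeoPlus} {δ : ℝ}
    (hgh : dist (meanId g)⁻¹.toContinuousMap (meanId h)⁻¹.toContinuousMap ≤ δ) :
    ∃ a b : HomeoPlus, g = a * h * b ∧ dist a.toContinuousMap (ContinuousMap.id I) ≤ δ ∧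
      dist b.toContinuousMap (ContinuousMap.id I) ≤ δ := by
  have hδ : 0 ≤ δ := dist_nonneg.trans hgh
  set b := (meanId h)⁻¹ * meanId g
  have hb : ∀ x, dist (b x) x ≤ δ := fun x => by
    simpa [b, dist_comm] using (ContinuousMap.dist_apply_le_dist (meanId g x)).trans hgh
  have hhb : ∀ x, dist (g x) (h (b x)) = dist (b x) x := fun x => by
    have hmean : (meanId h (b x) : ℝ) = meanId g x := by simp [b]
    rw [coe_meanId_apply, coe_meanId_apply] at hmean
    simp only [Subtype.dist_eq, Real.dist_eq]
    congr 1
    linarith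
  refine ⟨g * b⁻¹ * h⁻¹, b, by group, (ContinuousMap.dist_le hδ).2 fun y => ?_,
    (ContinuousMap.dist_le hδ).2 hb⟩
  obtain ⟨x, rfl⟩ : ∃ x, h (b x) = y := ⟨b⁻¹ (h⁻¹ y), by simp⟩
  simpa [hhb] using hb x

theorem exists_forall_dist_lt_mem_of_mem_nhds_one {V : Set HomeoPlus} (hV : V ∈ 𝓝 1) :
    ∃ ε > 0, ∀ v : HomeoPlus, dist v.toContinuousMap (ContinuousMap.id I) < ε → v ∈ V := by
  rw [isInducing_toContinuousMap.nhds_eq_comap, Filter.mem_comap] at hV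
  obtain ⟨O, hO, hOV⟩ := hV
  obtain ⟨ε, hε, hball⟩ := Metric.mem_nhds_iff.1 hO
  exact ⟨ε, hε, fun v hv => hOV (hball hv)⟩

theorem exists_finite_mul_mul_eq_univ {V : Set HomeoPlus} (hV : V ∈ 𝓝 1) :
    ∃ F : Set HomeoPlus, F.Finite ∧ V * F * V = univ := by
  obtain ⟨ε, hε, hεV⟩ := exists_forall_dist_lt_mem_of_mem_nhds_one hV
  let φ : HomeoPlus → C(I, I) := fun g => (meanId g)⁻¹.toContinuousMap
  have hφ : TotallyBounded (φ '' univ) :=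
    (ContinuousMap.isCompact_setOf_lipschitzWith 2).totallyBounded.subset
      (by rintro _ ⟨g, -, rfl⟩; exact lipschitzWith_inv_meanId g)
  obtain ⟨F, -, hF, hcover⟩ :=
    exists_subset_image_finite_and.1 (finite_approx_of_totallyBounded hφ ε hε)
  refine ⟨F, hF, eq_univ_of_forall fun g => ?_⟩
  obtain ⟨_, ⟨f, hf, rfl⟩, hgf⟩ := mem_iUnion₂.1 (hcover (mem_image_of_mem φ (mem_univ g)))
  obtain ⟨a, b, rfl, ha, hb⟩ := 
    exists_eq_mul_mul_of_dist_inv_meanId_le (le_refl (dist (φ g) (φ f)))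
  exact mul_mem_mul (mul_mem_mul (hεV a (ha.trans_lt hgf)) hf) (hεV b (hb.trans_lt hgf))

end HomeoPlus

open Pointwise in
/-- `Homeo⁺[0,1]` with the topology of uniform convergence is Roelcke-precompact:
every nonempty open `U` admits a finite `F` with `U * F * U` everything. -/
theorem stmt_9 :
    ∀ U : Set HomeoPlus, U.Nonempty → IsOpen U →
      ∃ F : Set HomeoPlus, F.Finite ∧ U * F * U = Set.univ :=
  fun _ hne hU => exists_finite_mul_mul_eq_univ_of_isOpen
    (fun _ hV => HomeoPlus.exists_finite_mul_mul_eq_univ hV) hU hne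
end

section
/- Let n ≥ 1 and let ξ = (ξ_0, …, ξ_{n−1}) be an n-tuple of continuous weakly increasing surjections [0,1] → [0,1] such that (1/n)·Σ_{i<n} ξ_i(t) = t for all t ∈ [0,1]. Then each component ξ_i is Lipschitz with constant at most n. -/
/-- If `ξ` is an `n`-tuple of continuous weakly increasing surjections of `[0,1]`
whose average is the identity, then each component is `n`-Lipschitz. -/
theorem stmt_10 (n : ℕ) (hn : 1 ≤ n) (ξ : Fin n → unitInterval → unitInterval)
    (hcont : ∀ i, Continuous (ξ i)) (hmono : ∀ i, Monotone (ξ i))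
    (hsurj : ∀ i, Function.Surjective (ξ i))
    (havg : ∀ t : unitInterval, (1 / n : ℝ) * ∑ i, (ξ i t : ℝ) = t) :
    ∀ i, LipschitzWith n (ξ i) := by
  have hn0 : (n : ℝ) ≠ 0 := by positivity
  have hsum : ∀ t : unitInterval, ∑ i, (ξ i t : ℝ) = n * t := by
    intro t
    have := havg t
    field_simp at this
    linarith [this]
  have key : ∀ i (x y : unitInterval), x ≤ y → (ξ i y : ℝ) - ξ i x ≤ n * (y - x) := by
    intro i x y hxy
    have h1 : ∑ j, ((ξ j y : ℝ) - ξ j x) = n * ((y : ℝ) - x) := by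
      rw [Finset.sum_sub_distrib, hsum, hsum]; ring
    have h2 : (ξ i y : ℝ) - ξ i x ≤ ∑ j, ((ξ j y : ℝ) - ξ j x) := by
      refine Finset.single_le_sum (f := fun j => ((ξ j y : ℝ) - ξ j x)) (fun j _ => ?_) (Finset.mem_univ i)
      have := hmono j hxy
      simpa using sub_nonneg.mpr (Subtype.coe_le_coe.mpr this)
    linarith
  intro i
  apply LipschitzWith.of_dist_le_mul
  intro x y
  rcases le_total x y with h | h
  · rw [Subtype.dist_eq, Subtype.dist_eq, Real.dist_eq, Real.dist_eq,
      abs_of_nonpos (by simpa using sub_nonneg.mpr (Subtype.coe_le_coe.mpr (hmono i h))),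
      abs_of_nonpos (by simpa using sub_nonneg.mpr (Subtype.coe_le_coe.mpr h))]
    have := key i x y h
    push_cast
    linarith
  · rw [Subtype.dist_eq, Subtype.dist_eq, Real.dist_eq, Real.dist_eq,
      abs_of_nonneg (by simpa using sub_nonneg.mpr (Subtype.coe_le_coe.mpr (hmono i h))),
      abs_of_nonneg (by simpa using sub_nonneg.mpr (Subtype.coe_le_coe.mpr h))]
    have := key i y x h
    push_cast
    linarith
end
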